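/- For an odd prime p and integer k ≥ 1, the product of all integers i with 1 ≤ i ≤ p^k - 1 and p not dividing i is congruent to -1 modulo p^k. -/

import Mathlib

open Finset

lemma sq_eq_one_aux (p k : ℕ) (hp : p.Prime) (hodd : Odd p) (hk : 1 ≤ k)
    (x : ZMod (p ^ k)) (hx : x * x = 1) : x = 1 ∨ x = -1 := by
  have hn : 1 < p ^ k := Nat.one_lt_pow (by omega) hp.one_lt
  haveI : NeZero (p ^ k) := ⟨by omega⟩
  haveI : Fact (1 < p ^ k) := ⟨hn⟩
  obtain ⟨a, hxa, halt⟩ : ∃ a : ℕ, (a : ZMod (p ^ k)) = x ∧ a < p ^ k :=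
    ⟨x.val, by rw [ZMod.natCast_val, ZMod.cast_id], x.val_lt⟩
  have ha1 : 1 ≤ a := by
    rcases Nat.eq_zero_or_pos a with h0 | h
    · exfalso
      have : x = 0 := by rw [← hxa, h0, Nat.cast_zero]
      rw [this, mul_zero] at hx
      exact one_ne_zero hx.symm
    · exact h
  have hdvd : p ^ k ∣ a * a - 1 := by
    have : ((a * a - 1 : ℕ) : ZMod (p ^ k)) = 0 := by
      rw [Nat.cast_sub (by nlinarith)]
      push_cast
      rw [hxa, hx]; ring
    exact (ZMod.natCast_eq_zero_iff _ _).mp this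
  have hfact : a * a - 1 = (a - 1) * (a + 1) := by
    obtain ⟨b, rfl⟩ : ∃ b, a = b + 1 := ⟨a - 1, by omega⟩
    have h1 : (b + 1) * (b + 1) = b * (b + 2) + 1 := by ring
    have h2 : (b + 1 - 1) * (b + 1 + 1) = b * (b + 2) := by
      congr 1 <;> omega
    omega
  rw [hfact] at hdvd
  have hnotboth : ¬ p ∣ (a - 1) ∨ ¬ p ∣ (a + 1) := by
    by_contra h
    push_neg at h
    have h2 : p ∣ 2 := by
      have := Nat.dvd_sub h.2 h.1
      have heq : a + 1 - (a - 1) = 2 := by omega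
      rwa [heq] at this
    have h3 := Nat.le_of_dvd (by norm_num) h2
    have h4 := hp.two_le
    interval_cases p
    simp [Nat.odd_iff] at hodd
  rcases hnotboth with h | h
  · -- p ∤ a - 1, so p^k ∣ a + 1
    have hcop : Nat.Coprime (p ^ k) (a - 1) :=
      Nat.Coprime.pow_left k (hp.coprime_iff_not_dvd.mpr h)
    have hdvd2 : p ^ k ∣ a + 1 := hcop.dvd_of_dvd_mul_left hdvd
    have : a + 1 = p ^ k := by
      have := Nat.le_of_dvd (by omega) hdvd2
      omega
    right
    rw [← hxa]
    have : a = p ^ k - 1 := by omega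
    rw [this, Nat.cast_sub hn.le]
    simp
  · have hcop : Nat.Coprime (p ^ k) (a + 1) :=
      Nat.Coprime.pow_left k (hp.coprime_iff_not_dvd.mpr h)
    have hdvd2 : p ^ k ∣ a - 1 := hcop.dvd_of_dvd_mul_right hdvd
    have : a - 1 = 0 := by
      rcases Nat.eq_zero_or_pos (a - 1) with h0 | hpos
      · exact h0
      · have := Nat.le_of_dvd hpos hdvd2; omega
    left
    rw [← hxa]
    have : a = 1 := by omega
    rw [this]; simp

lemma prod_units_aux (p k : ℕ) (hp : p.Prime) (hodd : Odd p) (hk : 1 ≤ k) :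
    haveI : NeZero (p ^ k) := ⟨pow_ne_zero k hp.pos.ne'⟩
    ∏ x : (ZMod (p ^ k))ˣ, x = (-1 : (ZMod (p ^ k))ˣ) := by
  have hn : 1 < p ^ k := Nat.one_lt_pow (by omega) hp.one_lt
  haveI : NeZero (p ^ k) := ⟨by omega⟩
  haveI : Fact (1 < p ^ k) := ⟨hn⟩
  haveI : Fact (2 < p ^ k) := ⟨by
    rcases hp.two_le.lt_or_eq with h | h
    · calc 2 < p := h
        _ ≤ p ^ k := Nat.le_self_pow (by omega) p
    · exfalso; rw [← h] at hodd; simp [Nat.odd_iff] at hodd⟩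
  have hinv : ∀ a : (ZMod (p ^ k))ˣ, a⁻¹ = a ↔ a = 1 ∨ a = -1 := by
    intro a
    constructor
    · intro h
      have : (a : ZMod (p ^ k)) * a = 1 := by
        nth_rewrite 1 [← h]
        rw [← Units.val_mul]
        simp
      rcases sq_eq_one_aux p k hp hodd hk a this with h1 | h1
      · left; ext; simpa using h1
      · right; ext; simpa using h1
    · rintro (rfl | rfl) <;> simp
  have hne : (-1 : (ZMod (p ^ k))ˣ) ≠ 1 := by
    intro h
    have := congrArg (Units.val) h
    simp only [Units.val_neg, Units.val_one] at this
    exact ZMod.neg_one_ne_one this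
  have key : ∏ x ∈ (Finset.univ : Finset (ZMod (p ^ k))ˣ).erase (-1), x = 1 :=
    Finset.prod_involution (fun x _ => x⁻¹) (fun a _ => mul_inv_cancel a)
      (fun a ha hne1 => by
        simp only [Finset.mem_erase, Finset.mem_univ, and_true] at ha
        intro h
        rcases (hinv a).mp h with rfl | rfl
        · exact hne1 rfl
        · exact ha rfl)
      (fun a ha => Finset.mem_erase.mpr ⟨by
          intro h
          apply (Finset.mem_erase.mp ha).1
          have h' : a⁻¹ = -1 := h
          rw [← inv_inv a, h']; simp, Finset.mem_univ _⟩)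
      (fun a _ => inv_inv a)
  calc ∏ x : (ZMod (p ^ k))ˣ, x
      = (-1) * ∏ x ∈ (Finset.univ : Finset (ZMod (p ^ k))ˣ).erase (-1), x := by
        rw [← Finset.prod_erase_mul _ _ (Finset.mem_univ (-1))]
        rw [mul_comm]
    _ = -1 := by rw [key, mul_one]

theorem stmt_11 (p k : ℕ) (hp : p.Prime) (hodd : Odd p) (hk : 1 ≤ k) :
    ((∏ i ∈ (Finset.Icc 1 (p ^ k - 1)).filter (fun i => ¬ p ∣ i), i : ℕ) : ZMod (p ^ k)) = -1 := by
  have hn : 1 < p ^ k := Nat.one_lt_pow (by omega) hp.one_lt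
  haveI : NeZero (p ^ k) := ⟨by omega⟩
  haveI : Fact (1 < p ^ k) := ⟨hn⟩
  have key : ∏ x : (ZMod (p ^ k))ˣ, (x : ZMod (p ^ k)) =
      ∏ i ∈ (Finset.Icc 1 (p ^ k - 1)).filter (fun i => ¬ p ∣ i), ((i : ℕ) : ZMod (p ^ k)) := by
    refine Finset.prod_bij (fun x _ => (x : ZMod (p ^ k)).val) ?_ ?_ ?_ ?_
    · intro x _
      have hco : Nat.Coprime ((x : ZMod (p ^ k)).val) (p ^ k) := ZMod.val_coe_unit_coprime x
      simp only [Finset.mem_filter, Finset.mem_Icc]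
      refine ⟨⟨?_, ?_⟩, ?_⟩
      · by_contra h
        push_neg at h
        interval_cases hv : ((x : ZMod (p ^ k)).val)
        simp [Nat.Coprime] at hco
        have := hp.two_le
        omega
      · have := ZMod.val_lt (x : ZMod (p ^ k)); omega
      · intro hdvd
        have : p ∣ Nat.gcd ((x : ZMod (p ^ k)).val) (p ^ k) :=
          Nat.dvd_gcd hdvd (dvd_pow_self p (by omega))
        rw [hco] at this
        exact Nat.Prime.one_lt hp |>.ne' (Nat.le_antisymm (Nat.le_of_dvd one_pos this) hp.one_lt.le ▸ rfl) |>.elim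
    · intro a _ b _ h
      ext
      exact ZMod.val_injective _ h
    · intro i hi
      simp only [Finset.mem_filter, Finset.mem_Icc] at hi
      have hco : Nat.Coprime i (p ^ k) :=
        Nat.Coprime.pow_right k ((hp.coprime_iff_not_dvd.mpr hi.2).symm)
      refine ⟨ZMod.unitOfCoprime i hco, Finset.mem_univ _, ?_⟩
      show ((ZMod.unitOfCoprime i hco : (ZMod (p ^ k))ˣ) : ZMod (p ^ k)).val = i
      rw [ZMod.coe_unitOfCoprime, ZMod.val_natCast, Nat.mod_eq_of_lt (by omega)]
    · intro x _
      rw [ZMod.natCast_val, ZMod.cast_id]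
  rw [Nat.cast_prod, ← key]
  have := prod_units_aux p k hp hodd hk
  calc ∏ x : (ZMod (p ^ k))ˣ, (x : ZMod (p ^ k))
      = ((∏ x : (ZMod (p ^ k))ˣ, x : (ZMod (p ^ k))ˣ) : ZMod (p ^ k)) := by
        exact (map_prod (Units.coeHom (ZMod (p ^ k))) _ _).symm
    _ = ((-1 : (ZMod (p ^ k))ˣ) : ZMod (p ^ k)) := by rw [this]
    _ = -1 := by simp
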